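/- Let h be the morphism from {0,1,2}-words to binary words defined by h(0) = 010001, h(1) = 0100010001, h(2) = 01000100010001. For every squarefree word w over {0,1,2}, the word h(w) is good and every nonempty factor of h(w) has exponent at most 15/4; moreover, if |w| ≥ 5, then h(w) contains a factor of exponent exactly 15/4. -/

import Mathlib

/-- Bitwise complement of a binary word. -/
def comp (x : List Bool) : List Bool := x.map (fun b => !b)

/-- An antisquare is a nonempty word of the form `y ++ comp y`. -/
def Antisquare (x : List Bool) : Prop := ∃ y : List Bool, y ≠ [] ∧ x = y ++ comp y

/-- `w` has period `p ≥ 1` if `w[i] = w[i+p]` whenever both indices are valid. -/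
def HasPeriod (w : List Bool) (p : ℕ) : Prop :=
  1 ≤ p ∧ ∀ i, i + p < w.length → w.getD i false = w.getD (i + p) false

/-- The exponent of a finite word: its length divided by its least period. -/
noncomputable def exponent (w : List Bool) : ℝ :=
  (w.length : ℝ) / ((sInf {p : ℕ | HasPeriod w p} : ℕ) : ℝ)

/-- `u` is a factor of the right-infinite word `w : ℕ → Bool`. -/
def FactorInf (u : List Bool) (w : ℕ → Bool) : Prop :=
  ∃ i : ℕ, u = (List.range u.length).map (fun t => w (i + t))

/-- `u` is a factor of the bi-infinite word `w : ℤ → Bool`. -/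
def FactorBi (u : List Bool) (w : ℤ → Bool) : Prop :=
  ∃ i : ℤ, u = (List.range u.length).map (fun t => w (i + (t : ℤ)))

/-- A binary word is good if its only antisquare factors are `01` and `10`. -/
def Good (w : List Bool) : Prop :=
  ∀ u, u <:+: w → Antisquare u → u = [false, true] ∨ u = [true, false]

/-- The morphism h: 0 → 010001, 1 → 0100010001, 2 → 01000100010001. -/
def hM : Fin 3 → List Bool
  | 0 => [false, true, false, false, false, true]
  | 1 => [false, true, false, false, false, true, false, false, false, true]
  | 2 => [false, true, false, false, false, true, false, false, false, true,
          false, false, false, true]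

/-- A word over {0,1,2} is squarefree if it contains no factor uu with u nonempty. -/
def SquarefreeWord (w : List (Fin 3)) : Prop :=
  ∀ u : List (Fin 3), u ≠ [] → ¬ (u ++ u) <:+: w

/-!
The `1`s of `h(w)` are separated by runs of three `0`s, except for a single `0` between consecutive
blocks (`…0001 01 0001…`), so a window of length 6 holds at most two of them; an antisquare
`y ȳ` holds exactly `|y|` of them, which bounds `|y| ≤ 4`, and the remaining short antisquares
are excluded by inspecting images of words of length at most 3.

The factor `101` occurs in `h(w)` only across block boundaries, so the block decomposition of
`h(w)` can be read off locally, and `h(x)01` determines `x`. If a factor of `h(w)` with period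
`p ≥ 7` had exponent above `15/4`, the period would carry the first block boundary inside it to a
boundary `p` positions later, so that `p = |h(x)|` for a factor `x` of `w`; this rules out
`p ∈ {7, 8}`, and for `p ≥ 9` the factor is long enough to carry `h(x)01` once more, forcing the
square `xx` in `w`. Periods `p ≤ 6` are excluded by inspecting images of squarefree words of
length at most 5.

A squarefree ternary word of length 4 contains `2`, and `h(2)0 = (0100)³010` has period 4 and
length 15.
-/

theorem hasPeriod_iff_drop_prefix {u : List Bool} {p : ℕ} :
    HasPeriod u p ↔ 1 ≤ p ∧ u.drop p <+: u := by
  simp only [HasPeriod, List.prefix_iff_getElem, List.length_drop, List.getElem_drop]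
  refine and_congr_right fun _ =>
    ⟨fun h => ⟨by omega, fun i hi => ?_⟩, fun ⟨_, h⟩ i hi => ?_⟩
  · rw [← List.getD_eq_getElem _ false, ← List.getD_eq_getElem _ false, add_comm]
    exact (h i (by omega)).symm
  · rw [List.getD_eq_getElem _ _ (by omega), List.getD_eq_getElem _ _ (by omega)]
    simpa [add_comm] using (h i (by omega)).symm

theorem HasPeriod.take {u : List Bool} {p : ℕ} (hp : HasPeriod u p) (n : ℕ) :
    HasPeriod (u.take n) p := by
  obtain ⟨hp1, hpre⟩ := hasPeriod_iff_drop_prefix.1 hp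
  refine hasPeriod_iff_drop_prefix.2 ⟨hp1, ?_⟩
  rw [List.drop_take]
  exact (hpre.take (n - p)).trans (List.take_prefix_take_left (by omega))

theorem HasPeriod.prefix_drop_add {u W z : List Bool} {n j p : ℕ} (hp : HasPeriod u p)
    (hu : u <+: W.drop n) (hnj : n ≤ j) (hz : z <+: W.drop j)
    (hlen : j + p + z.length ≤ n + u.length) : z <+: W.drop (j + p) := by
  obtain ⟨i, rfl⟩ := Nat.exists_eq_add_of_le hnj
  have hu' : ∀ j, u.drop j <+: W.drop (n + j) := fun j => by
    simpa [List.drop_drop] using hu.drop j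
  have hzu : z <+: u.drop i :=
    List.prefix_of_prefix_length_le hz (hu' i) (by rw [List.length_drop]; omega)
  have hshift : u.drop (i + p) <+: u.drop i := by
    simpa [List.drop_drop, add_comm] using (hasPeriod_iff_drop_prefix.1 hp).2.drop i
  rw [add_assoc]
  exact (List.prefix_of_prefix_length_le hzu hshift (by rw [List.length_drop]; omega)).trans
    (hu' (i + p))

theorem exponent_le_of_forall_hasPeriod {u : List Bool} (hu : u ≠ []) {r : ℝ}
    (h : ∀ p, HasPeriod u p → (u.length : ℝ) ≤ r * p) : exponent u ≤ r := by
  have hne : {p | HasPeriod u p}.Nonempty :=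
    ⟨u.length, List.length_pos_iff.2 hu, fun i hi => by omega⟩
  have hmin : HasPeriod u (sInf {p | HasPeriod u p}) := Nat.sInf_mem hne
  rw [exponent, div_le_iff₀ (by exact_mod_cast hmin.1)]
  exact h _ hmin

theorem exponent_eq_of_forall_lt_not_hasPeriod {u : List Bool} {p : ℕ} (hp : HasPeriod u p)
    (hmin : ∀ q < p, ¬ HasPeriod u q) : exponent u = u.length / p := by
  have hinf : sInf {q | HasPeriod u q} = p :=
    le_antisymm (Nat.sInf_le hp)
      (le_csInf ⟨p, hp⟩ fun q hq => not_lt.1 fun hlt => hmin q hlt hq)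
  rw [exponent, hinf]

theorem count_le_mul_of_forall_infix {α : Type*} [BEq α] (a : α) {m d : ℕ} (hm : 0 < m)
    (u : List α) (h : ∀ f, f <:+: u → f.length ≤ m → f.count a ≤ d) :
    u.count a ≤ d * ((u.length + m - 1) / m) := by
  induction hn : u.length using Nat.strong_induction_on generalizing u with
  | _ n ih =>
    by_cases hle : n ≤ m
    · rcases u with _ | ⟨b, t⟩
      · simp
      · have h1 : 1 ≤ (n + m - 1) / m := by
          rw [List.length_cons] at hn
          exact (Nat.one_le_div_iff hm).2 (by omega)
        calc (b :: t).count a ≤ d := h _ (List.infix_refl _) (by omega)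
          _ ≤ d * ((n + m - 1) / m) := Nat.le_mul_of_pos_right d h1
    · have htake := h (u.take m) (List.take_prefix m u).isInfix (by simp)
      have hdrop := ih (n - m) (by omega) (u.drop m)
        (fun f hf => h f (hf.trans (List.drop_suffix m u).isInfix)) (by simp [hn])
      have hdiv : (n - m + m - 1) / m + 1 = (n + m - 1) / m := by
        rw [← Nat.add_div_right _ hm]; congr 1; omega
      rw [← List.take_append_drop m u, List.count_append, ← hdiv, mul_add, mul_one]
      omega

theorem count_true_append_comp (y : List Bool) : (y ++ comp y).count true = y.length := by
  rw [List.count_append, comp, ← Bool.not_false,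
    List.count_map_of_injective _ _ Bool.not_injective]
  exact List.count_true_add_count_false y

def hImage (w : List (Fin 3)) : List Bool := (w.map hM).flatten

@[simp] theorem hImage_nil : hImage [] = [] := rfl

@[simp] theorem hImage_cons (a : Fin 3) (w : List (Fin 3)) : hImage (a :: w) = hM a ++ hImage w :=
  rfl

@[simp] theorem hImage_append (v w : List (Fin 3)) : hImage (v ++ w) = hImage v ++ hImage w := by
  simp [hImage]

theorem length_hM_bounds (a : Fin 3) : 6 ≤ (hM a).length ∧ (hM a).length ≤ 14 := by
  revert a; decide

theorem false_true_prefix_hM (a : Fin 3) : [false, true] <+: hM a := by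
  revert a; decide

theorem true_suffix_hM (a : Fin 3) : [true] <:+ hM a := by
  revert a; decide

theorem false_true_prefix_hImage {r : List (Fin 3)} (hr : r ≠ []) :
    [false, true] <+: hImage r := by
  obtain ⟨a, r, rfl⟩ := List.exists_cons_of_ne_nil hr
  exact (false_true_prefix_hM a).trans (List.prefix_append _ _)

theorem false_true_prefix_hImage_append (r : List (Fin 3)) :
    [false, true] <+: hImage r ++ [false, true] := by
  rcases eq_or_ne r [] with rfl | hr
  · exact List.prefix_refl _
  · exact (false_true_prefix_hImage hr).trans (List.prefix_append _ _)

theorem true_suffix_hImage {v : List (Fin 3)} (hv : v ≠ []) : [true] <:+ hImage v := by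
  obtain ⟨v, a, rfl⟩ := List.eq_nil_or_concat v |>.resolve_left hv
  simpa using (true_suffix_hM a).trans (List.suffix_append _ _)

theorem exists_prefix_of_prefix_hImage {y : List Bool} {w : List (Fin 3)} (hy : y <+: hImage w) :
    ∃ v, v <+: w ∧ y <+: hImage v ∧ 6 * v.length ≤ y.length + 5 := by
  induction w generalizing y with
  | nil => exact ⟨[], List.nil_prefix, hy, by simp [List.prefix_nil.1 hy]⟩
  | cons a w ih =>
    rw [hImage_cons] at hy
    have ha := length_hM_bounds a
    rcases eq_or_ne y [] with rfl | hy0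
    · exact ⟨[], List.nil_prefix, List.nil_prefix, by simp⟩
    by_cases hle : y.length ≤ (hM a).length
    · refine ⟨[a], ⟨w, rfl⟩, by simpa [List.isPrefix_append_of_length hle] using hy, ?_⟩
      have := List.length_pos_iff.2 hy0
      rw [List.length_singleton]
      omega
    · obtain ⟨y, rfl⟩ := List.prefix_of_prefix_length_le (List.prefix_append _ _) hy (by omega)
      obtain ⟨v, hvw, hyv, hlen⟩ := ih ((List.prefix_append_right_inj _).1 hy)
      refine ⟨a :: v, (List.prefix_cons_inj a).2 hvw, by simpa using hyv, ?_⟩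
      simp only [List.length_cons, List.length_append]
      omega

theorem exists_infix_of_infix_hImage {u : List Bool} {w : List (Fin 3)} (hu : u <:+: hImage w) :
    ∃ v, v <:+: w ∧ u <:+: hImage v ∧ 6 * v.length ≤ u.length + 10 := by
  induction w with
  | nil => exact ⟨[], List.infix_refl _, hu, by simp [List.eq_nil_of_infix_nil hu]⟩
  | cons a w ih =>
    rw [hImage_cons, List.infix_append_iff_ne_nil] at hu
    rcases hu with hu | hu | ⟨l₁, l₂, h₁, -, rfl, hl₁, hl₂⟩
    · exact ⟨[a], ⟨[], w, rfl⟩, by simpa using hu, by simp⟩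
    · obtain ⟨v, hvw, huv, hlen⟩ := ih hu
      exact ⟨v, hvw.trans (List.suffix_cons a w).isInfix, huv, hlen⟩
    · obtain ⟨v, hvw, hl₂v, hlen⟩ := exists_prefix_of_prefix_hImage hl₂
      obtain ⟨s, hs⟩ := hl₁
      obtain ⟨t, ht⟩ := hl₂v
      refine ⟨a :: v, ((List.prefix_cons_inj a).2 hvw).isInfix, ⟨s, t, ?_⟩, ?_⟩
      · rw [hImage_cons, ← hs, ← ht]; simp
      · have := List.length_pos_iff.2 h₁
        simp only [List.length_cons, List.length_append]
        omega

def wordsOfLength : ℕ → List (List (Fin 3))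
  | 0 => [[]]
  | n + 1 => (wordsOfLength n).flatMap fun v => [0 :: v, 1 :: v, 2 :: v]

theorem mem_wordsOfLength (v : List (Fin 3)) : v ∈ wordsOfLength v.length := by
  induction v with
  | nil => simp [wordsOfLength]
  | cons a v ih =>
    simp only [wordsOfLength, List.length_cons, List.mem_flatMap]
    exact ⟨v, ih, by fin_cases a <;> simp⟩

theorem exists_tails_of_infix_hImage {u : List Bool} {w : List (Fin 3)} (hu : u <:+: hImage w) :
    ∃ v, v <:+: w ∧ 6 * v.length ≤ u.length + 10 ∧ ∃ t ∈ (hImage v).tails, u <+: t := by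
  obtain ⟨v, hvw, huv, hlen⟩ := exists_infix_of_infix_hImage hu
  obtain ⟨t, hut, ht⟩ := List.infix_iff_prefix_suffix.1 huv
  exact ⟨v, hvw, hlen, t, (List.mem_tails _ _).2 ht, hut⟩

theorem squarefreeWord_iff {v : List (Fin 3)} : SquarefreeWord v ↔
    ∀ t ∈ v.tails, ∀ k ∈ List.range t.length,
      ¬ t.take (k + 1) ++ t.take (k + 1) <+: t := by
  refine ⟨fun hv t ht k hk hsq => ?_, fun h x hx hsq => ?_⟩
  · have ht0 : t ≠ [] := by rintro rfl; simp at hk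
    exact hv _ (by simpa [List.take_eq_nil_iff] using ht0)
      (hsq.isInfix.trans ((List.mem_tails _ _).1 ht).isInfix)
  · obtain ⟨t, hxt, ht⟩ := List.infix_iff_prefix_suffix.1 hsq
    have hlen := List.length_pos_iff.2 hx
    have htake : t.take x.length = x :=
      (List.prefix_iff_eq_take.1 ((List.prefix_append x x).trans hxt)).symm
    refine h t ((List.mem_tails _ _).2 ht) (x.length - 1) ?_ ?_
    · have := hxt.length_le
      rw [List.length_append] at this
      rw [List.mem_range]
      omega
    · rwa [Nat.sub_add_cancel hlen, htake]

instance : DecidablePred SquarefreeWord := fun _ => decidable_of_iff _ squarefreeWord_iff.symm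

theorem SquarefreeWord.infix {v w : List (Fin 3)} (hw : SquarefreeWord w) (h : v <:+: w) :
    SquarefreeWord v :=
  fun x hx hsq => hw x hx (hsq.trans h)

-- A factor of length `ℓ` of `h(w)` lies in the image of a factor of `w` of length at most
-- `(ℓ + 10) / 6`, which is 2, 3 and 5 for the lengths `ℓ = 6, 8, 23` examined below.
theorem count_true_take_le_two_of_mem_wordsOfLength : ∀ n ≤ 2, ∀ v ∈ wordsOfLength n,
    ∀ t ∈ (hImage v).tails, ∀ k ≤ 6, (t.take k).count true ≤ 2 := by
  decide +kernel

theorem not_antisquare_prefix_of_mem_wordsOfLength : ∀ n ≤ 3, ∀ v ∈ wordsOfLength n,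
    ∀ t ∈ (hImage v).tails, ∀ k ∈ [2, 3, 4], k ≤ t.length →
      ¬ t.take k ++ comp (t.take k) <+: t := by
  decide +kernel

theorem not_short_period_of_mem_wordsOfLength :
    ∀ n ≤ 5, ∀ v ∈ wordsOfLength n, SquarefreeWord v →
    ∀ t ∈ (hImage v).tails, ∀ p ∈ [1, 2, 3, 4, 5, 6], 15 * p / 4 + 1 ≤ t.length →
      ¬ (t.take (15 * p / 4 + 1)).drop p <+: t.take (15 * p / 4 + 1) := by
  decide +kernel

theorem two_mem_of_mem_wordsOfLength_four :
    ∀ v ∈ wordsOfLength 4, SquarefreeWord v → 2 ∈ v := by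
  decide +kernel

theorem count_true_le_two {u : List Bool} {w : List (Fin 3)} (hu : u <:+: hImage w)
    (h6 : u.length ≤ 6) : u.count true ≤ 2 := by
  obtain ⟨v, -, hlen, t, ht, hut⟩ := exists_tails_of_infix_hImage hu
  rw [List.prefix_iff_eq_take.1 hut]
  exact count_true_take_le_two_of_mem_wordsOfLength v.length (by omega) v (mem_wordsOfLength v)
    t ht _ h6

theorem length_lt_two_of_antisquare_infix {y : List Bool} {w : List (Fin 3)}
    (hu : y ++ comp y <:+: hImage w) (h4 : y.length ≤ 4) : y.length < 2 := by
  by_contra! h2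
  obtain ⟨v, -, hlen, t, ht, hyt⟩ := exists_tails_of_infix_hImage hu
  have htake : t.take y.length = y :=
    (List.prefix_iff_eq_take.1 ((List.prefix_append _ _).trans hyt)).symm
  simp only [comp, List.length_append, List.length_map] at hlen
  refine not_antisquare_prefix_of_mem_wordsOfLength v.length (by omega) v (mem_wordsOfLength v)
    t ht y.length (by simp only [List.mem_cons, List.not_mem_nil, or_false]; omega) ?_ ?_
  · have := hyt.length_le; simp only [List.length_append] at this; omega
  · rwa [htake]

theorem good_hImage (w : List (Fin 3)) : Good (hImage w) := by
  rintro u hu ⟨y, hy, rfl⟩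
  have hcount := count_le_mul_of_forall_infix true (by norm_num : 0 < 6) (y ++ comp y)
    fun f hf h6 => count_true_le_two (hf.trans hu) h6
  rw [count_true_append_comp] at hcount
  simp only [List.length_append, comp, List.length_map] at hcount
  have hy1 := length_lt_two_of_antisquare_infix hu (by omega)
  rcases y with _ | ⟨b, _ | ⟨c, y⟩⟩
  · exact absurd rfl hy
  · cases b <;> simp [comp]
  · simp at hy1

theorem eq_of_hM_append_false_true_prefix {a b : Fin 3}
    (h : hM a ++ [false, true] <+: hM b ++ [false, true]) : a = b := by
  revert a b; decide

theorem add_one_eq_length_hM_of_true_false_true_prefix_drop {a : Fin 3} {d : ℕ}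
    (hd : d < (hM a).length)
    (h : [true, false, true] <+: (hM a ++ [false, true]).drop d) : d + 1 = (hM a).length := by
  revert a d; decide

theorem exists_eq_cons_of_hM_append_prefix {a : Fin 3} {r : List (Fin 3)}
    (h : hM a ++ [false, true] <+: hImage r) : ∃ r', r = a :: r' := by
  obtain ⟨b, r', rfl⟩ : ∃ b r', r = b :: r' :=
    List.exists_cons_of_ne_nil (by rintro rfl; simp at h)
  have hb : hM b ++ [false, true] <+: hImage (b :: r') ++ [false, true] := by
    simpa using false_true_prefix_hImage_append r'
  rcases List.prefix_or_prefix_of_prefix (h.trans (List.prefix_append _ _)) hb with h' | h'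
  · exact ⟨r', by rw [eq_of_hM_append_false_true_prefix h']⟩
  · exact ⟨r', by rw [eq_of_hM_append_false_true_prefix h']⟩

theorem prefix_of_hImage_append_prefix {x r : List (Fin 3)}
    (h : hImage x ++ [false, true] <+: hImage r) : x <+: r := by
  induction x generalizing r with
  | nil => exact List.nil_prefix
  | cons a x ih =>
    rw [hImage_cons, List.append_assoc] at h
    obtain ⟨r, rfl⟩ := exists_eq_cons_of_hM_append_prefix
      (((List.prefix_append_right_inj _).2 (false_true_prefix_hImage_append x)).trans h)
    rw [hImage_cons, List.prefix_append_right_inj] at h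
    exact (List.prefix_cons_inj a).2 (ih h)

theorem exists_eq_append_of_true_false_true_prefix {w : List (Fin 3)} {d : ℕ}
    (h : [true, false, true] <+: (hImage w).drop d) :
    ∃ v r, w = v ++ r ∧ (hImage v).length = d + 1 := by
  induction w generalizing d with
  | nil => simp at h
  | cons a w ih =>
    rw [hImage_cons] at h
    by_cases hd : (hM a).length ≤ d
    · rw [List.drop_append, List.drop_eq_nil_of_le hd, List.nil_append] at h
      obtain ⟨v, r, rfl, hv⟩ := ih h
      exact ⟨a :: v, r, rfl, by simp only [hImage_cons, List.length_append]; omega⟩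
    · refine ⟨[a], w, rfl, ?_⟩
      -- what follows `h(a)` is empty or starts with `01`, so the `101` already lies in `h(a) 01`
      have hlong : [true, false, true] <+: (hM a ++ (hImage w ++ [false, true])).drop d := by
        simpa using h.trans ((List.prefix_append _ [false, true]).drop d)
      have hshort :
          (hM a ++ [false, true]).drop d <+: (hM a ++ (hImage w ++ [false, true])).drop d :=
        ((List.prefix_append_right_inj _).2 (false_true_prefix_hImage_append w)).drop d
      simpa using (add_one_eq_length_hM_of_true_false_true_prefix_drop (by omega)
        (List.prefix_of_prefix_length_le hlong hshort
          (by simp only [List.length_drop, List.length_append, List.length_cons]; omega))).symm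

theorem true_false_true_prefix_drop {v r : List (Fin 3)} (hv : v ≠ []) (hr : r ≠ []) :
    [true, false, true] <+: (hImage (v ++ r)).drop ((hImage v).length - 1) := by
  obtain ⟨P, hP⟩ := true_suffix_hImage hv
  obtain ⟨Q, hQ⟩ := false_true_prefix_hImage hr
  rw [hImage_append, ← hP, ← hQ]
  simp

theorem exists_eq_append_lt_length_hImage_le {w : List (Fin 3)} {n : ℕ}
    (hn : n < (hImage w).length) :
    ∃ v r, w = v ++ r ∧ n < (hImage v).length ∧ (hImage v).length ≤ n + 14 := by
  induction w generalizing n with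
  | nil => simp at hn
  | cons a w ih =>
    have ha := length_hM_bounds a
    by_cases h : n < (hM a).length
    · refine ⟨[a], w, rfl, by simpa using h, ?_⟩
      rw [hImage_cons, hImage_nil, List.append_nil]
      omega
    · rw [hImage_cons, List.length_append] at hn
      obtain ⟨v, r, rfl, h1, h2⟩ := ih (n := n - (hM a).length) (by omega)
      refine ⟨a :: v, r, rfl, ?_, ?_⟩ <;> rw [hImage_cons, List.length_append] <;> omega

theorem length_hImage_ne_seven_and_ne_eight (x : List (Fin 3)) :
    (hImage x).length ≠ 7 ∧ (hImage x).length ≠ 8 := by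
  rcases x with _ | ⟨a, _ | ⟨b, x⟩⟩
  · simp
  · revert a; decide
  · have := length_hM_bounds a
    have := length_hM_bounds b
    simp only [hImage_cons, List.length_append, ne_eq]; omega

theorem exists_hImage_length_eq_of_hasPeriod {w : List (Fin 3)} {u : List Bool} {n p : ℕ}
    (hu : u <+: (hImage w).drop n) (hp : HasPeriod u p) (hlen : p + 16 ≤ u.length) :
    ∃ v x r, w = v ++ (x ++ r) ∧ n < (hImage v).length ∧ (hImage v).length ≤ n + 14 ∧
      (hImage x).length = p := by
  have hW : n + u.length ≤ (hImage w).length := by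
    have := hu.length_le; rw [List.length_drop] at this; omega
  obtain ⟨v, r₀, rfl, hn, hn14⟩ := exists_eq_append_lt_length_hImage_le (w := w) (n := n)
    (by omega)
  have hv : v ≠ [] := by rintro rfl; simp at hn
  have hr₀ : r₀ ≠ [] := by rintro rfl; simp only [List.append_nil] at hW; omega
  obtain ⟨v', r, hw, hv'⟩ := exists_eq_append_of_true_false_true_prefix
    (hp.prefix_drop_add hu (by omega) (true_false_true_prefix_drop hv hr₀)
      (by simp only [List.length_cons, List.length_nil]; omega))
  rcases List.append_eq_append_iff.1 hw with ⟨x, rfl, rfl⟩ | ⟨y, rfl, -⟩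
  · rw [hImage_append, List.length_append] at hv'
    exact ⟨v, x, r, rfl, hn, hn14, by omega⟩
  · have := hp.1
    simp only [hImage_append, List.length_append] at hv' hn
    omega

theorem not_squarefreeWord_of_hasPeriod {w : List (Fin 3)} {u : List Bool} {n p : ℕ}
    (hu : u <+: (hImage w).drop n) (hp : HasPeriod u p) (hlen : 2 * p + 16 ≤ u.length) :
    ¬ SquarefreeWord w := by
  obtain ⟨v, x, r, rfl, hn, hn14, hx⟩ := exists_hImage_length_eq_of_hasPeriod hu hp (by omega)
  have hW : n + u.length ≤ (hImage (v ++ (x ++ r))).length := by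
    have := hu.length_le; rw [List.length_drop] at this; omega
  have hr : r ≠ [] := by
    rintro rfl
    simp only [List.append_nil, hImage_append, List.length_append] at hW
    omega
  have hx0 : x ≠ [] := by
    rintro rfl
    have := hp.1
    simp only [hImage_nil, List.length_nil] at hx
    omega
  have hblock : hImage x ++ [false, true] <+: (hImage (v ++ (x ++ r))).drop (hImage v).length := by
    rw [hImage_append, List.drop_left, hImage_append, List.prefix_append_right_inj]
    exact false_true_prefix_hImage hr
  have hshift := hp.prefix_drop_add hu (by omega) hblock
    (by simp only [List.length_append, List.length_cons, List.length_nil]; omega)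
  rw [show (hImage v).length + p = (hImage (v ++ x)).length by simp [hx],
    ← List.append_assoc, hImage_append (v ++ x), List.drop_left] at hshift
  have hxr := prefix_of_hImage_append_prefix hshift
  exact fun hw => hw x hx0 (((List.prefix_append_right_inj x).2 hxr).isInfix.trans
    List.infix_append_right)

theorem length_le_of_hasPeriod_of_le_six {w : List (Fin 3)} (hw : SquarefreeWord w)
    {u : List Bool} (hu : u <:+: hImage w) {p : ℕ} (hp : HasPeriod u p) (h6 : p ≤ 6) :
    u.length ≤ 15 * p / 4 := by
  by_contra! hlt
  set k := 15 * p / 4 + 1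
  obtain ⟨v, hvw, hlen, t, ht, hut⟩ :=
    exists_tails_of_infix_hImage ((List.take_prefix k u).isInfix.trans hu)
  have hk : (u.take k).length = k := by simp only [List.length_take, inf_eq_left]; omega
  have hper := (hasPeriod_iff_drop_prefix.1 (hp.take k)).2
  rw [List.prefix_iff_eq_take.1 hut, hk] at hper
  have := hp.1
  have := hut.length_le
  exact not_short_period_of_mem_wordsOfLength v.length (by omega) v (mem_wordsOfLength v)
    (hw.infix hvw) t ht p (by simp only [List.mem_cons, List.not_mem_nil, or_false]; omega)
    (by omega) hper

theorem four_mul_length_le_of_hasPeriod {w : List (Fin 3)} (hw : SquarefreeWord w) {u : List Bool}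
    (hu : u <:+: hImage w) {p : ℕ} (hp : HasPeriod u p) : 4 * u.length ≤ 15 * p := by
  by_contra! hlt
  obtain ⟨s, hus, hs⟩ := List.infix_iff_prefix_suffix.1 hu
  rw [List.suffix_iff_eq_drop.1 hs] at hus
  obtain h6 | ⟨h7, h8⟩ | h9 : p ≤ 6 ∨ 7 ≤ p ∧ p ≤ 8 ∨ 9 ≤ p := by omega
  · have := length_le_of_hasPeriod_of_le_six hw hu hp h6
    omega
  · obtain ⟨-, x, -, -, -, -, hx⟩ := exists_hImage_length_eq_of_hasPeriod hus hp (by omega)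
    have := length_hImage_ne_seven_and_ne_eight x
    omega
  · exact not_squarefreeWord_of_hasPeriod hus hp (by omega) hw

theorem exponent_hM_two_append_false : exponent (hM 2 ++ [false]) = 15 / 4 := by
  have hp : HasPeriod (hM 2 ++ [false]) 4 := hasPeriod_iff_drop_prefix.2 (by decide)
  have hmin : ∀ q < 4, ¬ HasPeriod (hM 2 ++ [false]) q := by
    simp only [hasPeriod_iff_drop_prefix]; decide
  rw [exponent_eq_of_forall_lt_not_hasPeriod hp hmin]
  norm_num [hM]

theorem exists_eq_append_two_cons_cons {w : List (Fin 3)} (hw : SquarefreeWord w)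
    (h5 : 5 ≤ w.length) : ∃ s b r, w = s ++ 2 :: b :: r := by
  have h2 := two_mem_of_mem_wordsOfLength_four (w.take 4)
    (by simpa [show min 4 w.length = 4 by omega] using mem_wordsOfLength (w.take 4))
    (hw.infix (List.take_prefix 4 w).isInfix)
  obtain ⟨s, q, hq⟩ := List.append_of_mem h2
  obtain ⟨b, r, hbr⟩ := List.exists_cons_of_ne_nil (l := q ++ w.drop 4)
    (List.append_ne_nil_of_right_ne_nil _ (by simp only [ne_eq, List.drop_eq_nil_iff]; omega))
  exact ⟨s, b, r, by rw [← List.take_append_drop 4 w, hq, ← hbr]; simp⟩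

theorem hM_two_append_false_infix {w : List (Fin 3)} (hw : SquarefreeWord w) (h5 : 5 ≤ w.length) :
    hM 2 ++ [false] <:+: hImage w := by
  obtain ⟨s, b, r, rfl⟩ := exists_eq_append_two_cons_cons hw h5
  obtain ⟨Q, hQ⟩ := false_true_prefix_hM b
  refine ⟨hImage s, true :: Q ++ hImage r, ?_⟩
  simp [← hQ]

/-- for every squarefree ternary word w, h(w) is good and every
nonempty factor of h(w) has exponent ≤ 15/4; if |w| ≥ 5 the exponent 15/4 is
attained. -/
theorem stmt_18 (w : List (Fin 3)) (hw : SquarefreeWord w) :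
    Good ((w.map hM).flatten) ∧
    (∀ u, u <:+: (w.map hM).flatten → u ≠ [] → exponent u ≤ 15 / 4) ∧
    (5 ≤ w.length →
      ∃ u, u <:+: (w.map hM).flatten ∧ u ≠ [] ∧ exponent u = 15 / 4) := by
  refine ⟨good_hImage w, fun u hu hne => exponent_le_of_forall_hasPeriod hne fun p hp => ?_,
    fun h5 => ⟨_, hM_two_append_false_infix hw h5, by simp, exponent_hM_two_append_false⟩⟩
  have := four_mul_length_le_of_hasPeriod hw hu hp
  have : (4 * u.length : ℝ) ≤ 15 * p := by exact_mod_cast this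
  linarith
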